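/- Let Z(u) = u/(1+u)² and U(z) = (1 - sqrt(1-4z))/(2z) - 1 (with the principal branch of the square root, and U(0) = 0). Then U maps ℂ \ [1/4, ∞) bijectively onto the open unit disc, Z maps the open unit disc bijectively onto ℂ \ [1/4, ∞), and the two maps are mutually inverse holomorphic functions. -/

import Mathlib

open Complex

/-- `Z(u) = u/(1+u)²`. -/
noncomputable def Zmap (u : ℂ) : ℂ := u / (1 + u) ^ 2

/-- `U(z) = (1 - sqrt(1-4z))/(2z) - 1` with the principal branch of the square
root, extended by `U(0) = 0`. -/
noncomputable def Umap (z : ℂ) : ℂ :=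
  if z = 0 then 0 else (1 - (1 - 4 * z) ^ ((1 : ℂ) / 2)) / (2 * z) - 1

/-- The slit plane `ℂ \ [1/4, ∞)`. -/
def slitPlane14 : Set ℂ := {z : ℂ | ¬(z.im = 0 ∧ (1 / 4 : ℝ) ≤ z.re)}

/-! With `w = √(1 - 4z)` (principal branch), `U(z) = (1 - w)/(1 + w)` is the Cayley transform of
`w`, and conversely `1 - 4 Z(u) = ((1 - u)/(1 + u))²`. The Cayley transform is an involution
exchanging the right half-plane and the unit disc, `z ↦ 1 - 4z` maps `ℂ \ [1/4, ∞)` onto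
`ℂ \ (-∞, 0]`, and squaring maps the right half-plane bijectively onto `ℂ \ (-∞, 0]` with the
principal square root as inverse. -/

namespace Complex

lemma re_cpow_inv_two_pos {x : ℂ} (hx : x ∈ slitPlane) : 0 < (x ^ (2⁻¹ : ℂ)).re := by
  rw [cpow_inv_two_re, Real.sqrt_pos, div_pos_iff_of_pos_right two_pos]
  rcases mem_slitPlane_iff.mp hx with hre | him
  · linarith [norm_nonneg x]
  · linarith [abs_re_lt_norm.mpr him, neg_abs_le x.re]

lemma sq_mem_slitPlane {v : ℂ} (hv : 0 < v.re) : v ^ 2 ∈ slitPlane := by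
  rw [mem_slitPlane_iff, sq, mul_re, mul_im]
  by_cases him : v.im = 0
  · left; simp only [him, mul_zero, sub_zero]; positivity
  · right; rw [mul_comm v.im, ← two_mul]; exact mul_ne_zero two_ne_zero (mul_ne_zero hv.ne' him)

lemma one_add_ne_zero_of_re_pos {w : ℂ} (hw : 0 < w.re) : 1 + w ≠ 0 := by
  intro h
  have := congrArg re h
  simp only [add_re, one_re, zero_re] at this
  linarith

lemma one_add_ne_zero_of_norm_lt_one {u : ℂ} (hu : ‖u‖ < 1) : 1 + u ≠ 0 := by
  intro h
  rw [eq_neg_of_add_eq_zero_right h, norm_neg, norm_one] at hu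
  exact lt_irrefl _ hu

noncomputable def cayley (w : ℂ) : ℂ := (1 - w) / (1 + w)

lemma cayley_cayley {w : ℂ} (hw : 1 + w ≠ 0) : cayley (cayley w) = w := by
  unfold cayley
  field_simp
  ring

lemma norm_cayley_lt_one {w : ℂ} (hw : 0 < w.re) : ‖cayley w‖ < 1 := by
  have hw0 := one_add_ne_zero_of_re_pos hw
  rw [cayley, norm_div, div_lt_one (norm_pos_iff.mpr hw0), ← sq_lt_sq₀ (norm_nonneg _)
    (norm_nonneg _), Complex.sq_norm, Complex.sq_norm, normSq_apply, normSq_apply]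
  simp only [sub_re, sub_im, add_re, add_im, one_re, one_im]
  nlinarith

lemma re_cayley_pos {u : ℂ} (hu : ‖u‖ < 1) : 0 < (cayley u).re := by
  have hnormSq : normSq u < 1 := by
    rw [← Complex.sq_norm]; nlinarith [norm_nonneg u]
  rw [cayley, div_re, ← add_div]
  refine div_pos ?_ (normSq_pos.mpr (one_add_ne_zero_of_norm_lt_one hu))
  simp only [sub_re, sub_im, add_re, add_im, one_re, one_im, normSq_apply] at hnormSq ⊢
  nlinarith

lemma differentiableAt_cayley {w : ℂ} (hw : 1 + w ≠ 0) : DifferentiableAt ℂ cayley w :=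
  ((differentiableAt_const _).sub differentiableAt_id).div
    ((differentiableAt_const _).add differentiableAt_id) hw

end Complex

lemma one_sub_four_mul_mem_slitPlane_iff {z : ℂ} : 1 - 4 * z ∈ slitPlane ↔ z ∈ slitPlane14 := by
  simp only [mem_slitPlane_iff, slitPlane14, Set.mem_ofPred_eq, sub_re, sub_im, mul_re, mul_im,
    one_re, one_im, re_ofNat, im_ofNat]
  grind

lemma one_sub_four_mul_Zmap {u : ℂ} (hu : 1 + u ≠ 0) : 1 - 4 * Zmap u = cayley u ^ 2 := by
  rw [Zmap, cayley]
  field_simp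
  ring

lemma Umap_eq_cayley {z : ℂ} (hz : z ∈ slitPlane14) :
    Umap z = cayley ((1 - 4 * z) ^ (2⁻¹ : ℂ)) := by
  rw [Umap, one_div, cayley]
  set w := (1 - 4 * z) ^ (2⁻¹ : ℂ)
  have hw : w ^ 2 = 1 - 4 * z := cpow_ofNat_inv_pow _ 2
  have hw1 : 1 + w ≠ 0 :=
    one_add_ne_zero_of_re_pos (re_cpow_inv_two_pos (one_sub_four_mul_mem_slitPlane_iff.mpr hz))
  split_ifs with hz0
  · simp [w, hz0]
  · field_simp
    linear_combination -hw

lemma Umap_mapsTo : Set.MapsTo Umap slitPlane14 (Metric.ball 0 1) := fun z hz => by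
  rw [mem_ball_zero_iff, Umap_eq_cayley hz]
  exact norm_cayley_lt_one (re_cpow_inv_two_pos (one_sub_four_mul_mem_slitPlane_iff.mpr hz))

lemma Zmap_mapsTo : Set.MapsTo Zmap (Metric.ball 0 1) slitPlane14 := fun u hu => by
  rw [mem_ball_zero_iff] at hu
  rw [← one_sub_four_mul_mem_slitPlane_iff,
    one_sub_four_mul_Zmap (one_add_ne_zero_of_norm_lt_one hu)]
  exact sq_mem_slitPlane (re_cayley_pos hu)

lemma Umap_Zmap {u : ℂ} (hu : u ∈ Metric.ball 0 1) : Umap (Zmap u) = u := by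
  have hu1 : 1 + u ≠ 0 := one_add_ne_zero_of_norm_lt_one (mem_ball_zero_iff.mp hu)
  rw [Umap_eq_cayley (Zmap_mapsTo hu), one_sub_four_mul_Zmap hu1,
    sq_cpow_two_inv (re_cayley_pos (mem_ball_zero_iff.mp hu)), cayley_cayley hu1]

lemma Zmap_Umap {z : ℂ} (hz : z ∈ slitPlane14) : Zmap (Umap z) = z := by
  have hw := re_cpow_inv_two_pos (one_sub_four_mul_mem_slitPlane_iff.mpr hz)
  have hU : 1 + Umap z ≠ 0 := one_add_ne_zero_of_norm_lt_one (mem_ball_zero_iff.mp (Umap_mapsTo hz))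
  have h : 1 - 4 * Zmap (Umap z) = 1 - 4 * z := by
    rw [one_sub_four_mul_Zmap hU, Umap_eq_cayley hz, cayley_cayley (one_add_ne_zero_of_re_pos hw),
      cpow_ofNat_inv_pow]
  linear_combination -h / 4

lemma differentiableOn_Umap : DifferentiableOn ℂ Umap slitPlane14 := by
  refine DifferentiableOn.congr (fun z hz => ?_) (fun z hz => Umap_eq_cayley hz)
  have h := one_sub_four_mul_mem_slitPlane_iff.mpr hz
  have hsqrt : DifferentiableAt ℂ (fun z : ℂ => (1 - 4 * z) ^ (2⁻¹ : ℂ)) z :=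
    (by fun_prop : DifferentiableAt ℂ (fun z : ℂ => 1 - 4 * z) z).cpow_const h
  exact ((differentiableAt_cayley (one_add_ne_zero_of_re_pos (re_cpow_inv_two_pos h))).comp z
    hsqrt).differentiableWithinAt

lemma differentiableOn_Zmap : DifferentiableOn ℂ Zmap (Metric.ball 0 1) := fun u hu => by
  have h := pow_ne_zero 2 (one_add_ne_zero_of_norm_lt_one (mem_ball_zero_iff.mp hu))
  unfold Zmap
  fun_prop (disch := exact h)

/-- `U` maps `ℂ \ [1/4, ∞)` bijectively onto the open unit disc, `Z` maps the
open unit disc bijectively onto `ℂ \ [1/4, ∞)`, these maps are mutually inverse,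
and both are holomorphic on their respective domains. -/
theorem Z_U_bijective :
    Set.BijOn Umap slitPlane14 (Metric.ball (0 : ℂ) 1) ∧
    Set.BijOn Zmap (Metric.ball (0 : ℂ) 1) slitPlane14 ∧
    (∀ z ∈ slitPlane14, Zmap (Umap z) = z) ∧
    (∀ u ∈ Metric.ball (0 : ℂ) 1, Umap (Zmap u) = u) ∧
    DifferentiableOn ℂ Umap slitPlane14 ∧
    DifferentiableOn ℂ Zmap (Metric.ball (0 : ℂ) 1) := by
  have hinv : Set.InvOn Zmap Umap slitPlane14 (Metric.ball 0 1) :=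
    ⟨fun _ => Zmap_Umap, fun _ => Umap_Zmap⟩
  exact ⟨hinv.bijOn Umap_mapsTo Zmap_mapsTo, hinv.symm.bijOn Zmap_mapsTo Umap_mapsTo,
    fun _ => Zmap_Umap, fun _ => Umap_Zmap, differentiableOn_Umap, differentiableOn_Zmap⟩
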